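/- Let A, B be unital C*-algebras, H a complex Hilbert space, ι : B → B(H) an isometric *-homomorphism, and suppose there exists a completely positive map P : B(H) → B with P(ι(b)) = b for all b ∈ B (a completely positive conditional expectation onto the image of B). Then for all completely positive maps T1, T2 : A → B, β(T1, T2) = β(ι∘T1, ι∘T2). -/

import Mathlib

noncomputable section

/-- A map between star algebras is *completely positive* if, for every `n`, its
entrywise application to `n × n` matrices maps positive elements (i.e. elements of the form
`star y * y`) to positive elements. -/
def IsCPMap {A B : Type*} [NonUnitalSemiring A] [StarRing A]
    [NonUnitalSemiring B] [StarRing B] (T : A → B) : Prop :=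
  ∀ (n : ℕ) (x : Matrix (Fin n) (Fin n) A),
    (∃ y : Matrix (Fin n) (Fin n) A, x = star y * y) →
      ∃ z : Matrix (Fin n) (Fin n) B, x.map T = star z * z

/-- `That : A → M₂(B)` is a cp extension of the pair `(T₁, T₂)`: it is completely positive
and its diagonal entries are `T₁` and `T₂`. -/
def IsCPExtension {A B : Type*} [CStarAlgebra A] [CStarAlgebra B]
    (T₁ T₂ : A → B) (That : A →ₗ[ℂ] Matrix (Fin 2) (Fin 2) B) : Prop :=
  IsCPMap That ∧ (∀ a : A, That a 0 0 = T₁ a) ∧ (∀ a : A, That a 1 1 = T₂ a)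

/-- The Bures distance between two completely positive maps `T₁ T₂ : A → B`:
`β(T₁,T₂) = √ inf { ‖T₁ 1 + T₂ 1 - T̂₁₂ 1 - T̂₂₁ 1‖ | T̂ a cp extension of (T₁, T₂) }`. -/
noncomputable def buresDist {A B : Type*} [CStarAlgebra A] [CStarAlgebra B]
    (T₁ T₂ : A → B) : ℝ :=
  Real.sqrt (sInf { r : ℝ | ∃ That : A →ₗ[ℂ] Matrix (Fin 2) (Fin 2) B,
    IsCPExtension T₁ T₂ That ∧ r = ‖T₁ 1 + T₂ 1 - That 1 0 1 - That 1 1 0‖ })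



/-!
Pushing a cp extension of `(T₁, T₂)` forward entrywise along `ι` gives a cp extension of
`(ι ∘ T₁, ι ∘ T₂)` whose defect `T₁ 1 + T₂ 1 - T̂₁₂ 1 - T̂₂₁ 1` is the image under `ι`, hence has
the same norm. Conversely, applying `P` entrywise to a cp extension of `(ι ∘ T₁, ι ∘ T₂)` gives,
since `P ∘ ι = id`, a cp extension of `(T₁, T₂)` whose defect is `P` of the old defect. The old
defect is self-adjoint, and a unital positive map does not increase the norm of self-adjoint
elements. So every defect norm on one side is dominated by one on the other, and the infima agree.
-/

open Matrix

lemma Matrix.comp_star_mul_self {R n m : Type*} [NonUnitalSemiring R] [StarRing R]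
    [Fintype n] [Fintype m]
    (y : Matrix n n (Matrix m m R)) :
    comp n n m m R (star y * y) = star (comp n n m m R y) * comp n n m m R y := by
  rw [← compRingEquiv_apply, map_mul, star_eq_conjTranspose, star_eq_conjTranspose,
    compRingEquiv_apply, compRingEquiv_apply, conjTranspose_comp']

namespace IsCPMap

variable {R S : Type*} [NonUnitalSemiring R] [StarRing R] [NonUnitalSemiring S] [StarRing S]
  {T : R → S}

lemma exists_map_star_mul_self (hT : IsCPMap T) {ι : Type*} [Fintype ι] (y : Matrix ι ι R) :
    ∃ z : Matrix ι ι S, (star y * y).map T = star z * z := by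
  let e := Fintype.equivFin ι
  obtain ⟨z, hz⟩ := hT _ ((star y * y).submatrix e.symm e.symm)
    ⟨y.submatrix e.symm e.symm, by
      simp [star_eq_conjTranspose, conjTranspose_submatrix, submatrix_mul_equiv]⟩
  refine ⟨z.submatrix e e, ?_⟩
  have := congrArg (Matrix.submatrix · e e) hz
  simpa [star_eq_conjTranspose, conjTranspose_submatrix, submatrix_mul_equiv, submatrix_map]
    using this

lemma exists_apply_star_mul_self (hT : IsCPMap T) (y : R) :
    ∃ z : S, T (star y * y) = star z * z := by
  obtain ⟨z, hz⟩ := hT.exists_map_star_mul_self (Matrix.of fun (_ _ : Unit) => y)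
  exact ⟨z () (), by simpa [mul_apply] using congrFun₂ hz () ()⟩

lemma isSelfAdjoint_apply_star_mul_self (hT : IsCPMap T) (y : R) :
    IsSelfAdjoint (T (star y * y)) := by
  obtain ⟨z, hz⟩ := hT.exists_apply_star_mul_self y
  exact hz ▸ IsSelfAdjoint.star_mul_self z

lemma comp {U : Type*} [NonUnitalSemiring U] [StarRing U] {T' : S → U} (hT' : IsCPMap T')
    (hT : IsCPMap T) : IsCPMap (T' ∘ T) := by
  intro n x hx
  obtain ⟨z, hz⟩ := hT n x hx
  exact hT' n _ ⟨z, hz⟩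

lemma matrixMap (hT : IsCPMap T) (m : Type*) [Fintype m] :
    IsCPMap (fun M : Matrix m m R => M.map T) := by
  rintro n x ⟨y, rfl⟩
  obtain ⟨w, hw⟩ := hT.exists_map_star_mul_self (Matrix.comp (Fin n) (Fin n) m m R y)
  refine ⟨(Matrix.comp _ _ _ _ S).symm w, (Matrix.comp _ _ _ _ S).injective ?_⟩
  calc Matrix.comp _ _ _ _ S ((star y * y).map fun M => M.map T)
      = (Matrix.comp _ _ _ _ R (star y * y)).map T := rfl
    _ = star w * w := by rw [Matrix.comp_star_mul_self, hw]
    _ = _ := by rw [Matrix.comp_star_mul_self, Equiv.apply_symm_apply]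

end IsCPMap

lemma isCPMap_of_starHom {R S F : Type*} [NonUnitalSemiring R] [StarRing R]
    [NonUnitalSemiring S] [StarRing S] [FunLike F R S] [NonUnitalRingHomClass F R S]
    [StarHomClass F R S] (f : F) : IsCPMap f := by
  rintro n x ⟨y, rfl⟩
  refine ⟨y.map f, ?_⟩
  rw [Matrix.map_mul, star_eq_conjTranspose, star_eq_conjTranspose,
    conjTranspose_map _ fun b => map_star f b]

lemma IsSelfAdjoint.norm_le_of_mem_Icc {A : Type*} [CStarAlgebra A] [PartialOrder A]
    [StarOrderedRing A] {a : A} (ha : IsSelfAdjoint a) {r : ℝ} (hr : 0 ≤ r)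
    (h : a ∈ Set.Icc (-algebraMap ℝ A r) (algebraMap ℝ A r)) : ‖a‖ ≤ r := by
  rcases subsingleton_or_nontrivial A with hA | hA
  · simpa [Subsingleton.elim a 0] using hr
  rw [← map_neg] at h
  rcases CStarAlgebra.norm_or_neg_norm_mem_spectrum ha with hs | hs
  · exact (le_algebraMap_iff_spectrum_le ha).mp h.2 _ hs
  · linarith [(algebraMap_le_iff_le_spectrum ha).mp h.1 _ hs]

lemma PositiveLinearMap.norm_apply_le_of_isSelfAdjoint {A B : Type*} [CStarAlgebra A]
    [CStarAlgebra B] [PartialOrder A] [StarOrderedRing A] [PartialOrder B] [StarOrderedRing B]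
    (f : A →ₚ[ℂ] B) (hf : f 1 = 1) {a : A} (ha : IsSelfAdjoint a) : ‖f a‖ ≤ ‖a‖ := by
  have hf_alg : f (algebraMap ℝ A ‖a‖) = algebraMap ℝ B ‖a‖ := by
    simp [Algebra.algebraMap_eq_smul_one, hf]
  have h_le := f.apply_le_of_isSelfAdjoint a ha
  have h_neg_le := f.apply_le_of_isSelfAdjoint (-a) ha.neg
  rw [hf_alg] at h_le
  rw [norm_neg, hf_alg, map_neg, neg_le] at h_neg_le
  have hfa : IsSelfAdjoint (f a) := by
    simpa using ((IsSelfAdjoint.of_nonneg (sub_nonneg.mpr h_le)).sub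
      (IsSelfAdjoint.algebraMap B (.all ‖a‖))).neg
  exact hfa.norm_le_of_mem_Icc (norm_nonneg a) ⟨h_neg_le, h_le⟩

lemma IsCPMap.map_nonneg {A B : Type*} [CStarAlgebra A] [PartialOrder A] [StarOrderedRing A]
    [NonUnitalSemiring B] [StarRing B] [PartialOrder B] [StarOrderedRing B] {T : A → B}
    (hT : IsCPMap T) {a : A} (ha : 0 ≤ a) : 0 ≤ T a := by
  obtain ⟨y, rfl⟩ := CStarAlgebra.nonneg_iff_eq_star_mul_self.mp ha
  obtain ⟨z, hz⟩ := hT.exists_apply_star_mul_self y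
  exact hz ▸ star_mul_self_nonneg z

lemma IsCPMap.norm_apply_le_of_isSelfAdjoint {A B : Type*} [CStarAlgebra A] [CStarAlgebra B]
    {P : A →ₗ[ℂ] B} (hP : IsCPMap P) (hP1 : P 1 = 1) {a : A} (ha : IsSelfAdjoint a) :
    ‖P a‖ ≤ ‖a‖ := by
  let _ := CStarAlgebra.spectralOrder A
  let _ := CStarAlgebra.spectralOrderedRing A
  let _ := CStarAlgebra.spectralOrder B
  let _ := CStarAlgebra.spectralOrderedRing B
  exact (PositiveLinearMap.mk₀ P fun _ => hP.map_nonneg).norm_apply_le_of_isSelfAdjoint hP1 ha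

section Bures

variable {A B C : Type*} [CStarAlgebra A] [CStarAlgebra B] [CStarAlgebra C]

lemma IsCPExtension.map {T₁ T₂ : A → B} {That : A →ₗ[ℂ] Matrix (Fin 2) (Fin 2) B}
    (h : IsCPExtension T₁ T₂ That) {Φ : B →ₗ[ℂ] C} (hΦ : IsCPMap Φ) {S₁ S₂ : A → C}
    (hS₁ : ∀ a, Φ (T₁ a) = S₁ a) (hS₂ : ∀ a, Φ (T₂ a) = S₂ a) :
    IsCPExtension S₁ S₂ (Φ.mapMatrix ∘ₗ That) :=
  ⟨(hΦ.matrixMap _).comp h.1, fun a => (congrArg Φ (h.2.1 a)).trans (hS₁ a),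
    fun a => (congrArg Φ (h.2.2 a)).trans (hS₂ a)⟩

lemma IsCPExtension.isSelfAdjoint_defect {T₁ T₂ : A → B}
    {That : A →ₗ[ℂ] Matrix (Fin 2) (Fin 2) B} (h : IsCPExtension T₁ T₂ That) :
    IsSelfAdjoint (T₁ 1 + T₂ 1 - That 1 0 1 - That 1 1 0) := by
  have hM : (That 1).IsHermitian := by
    simpa using (h.1.isSelfAdjoint_apply_star_mul_self (1 : A)).isHermitian
  rw [← h.2.1, ← h.2.2, IsSelfAdjoint]
  simp only [star_sub, star_add, hM.apply]
  abel

lemma buresDist_eq_of_forall_exists_le {T₁ T₂ : A → B} {S₁ S₂ : A → C}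
    (hTS : ∀ That, IsCPExtension T₁ T₂ That → ∃ Shat, IsCPExtension S₁ S₂ Shat ∧
      ‖S₁ 1 + S₂ 1 - Shat 1 0 1 - Shat 1 1 0‖ ≤ ‖T₁ 1 + T₂ 1 - That 1 0 1 - That 1 1 0‖)
    (hST : ∀ Shat, IsCPExtension S₁ S₂ Shat → ∃ That, IsCPExtension T₁ T₂ That ∧
      ‖T₁ 1 + T₂ 1 - That 1 0 1 - That 1 1 0‖ ≤ ‖S₁ 1 + S₂ 1 - Shat 1 0 1 - Shat 1 1 0‖) :
    buresDist T₁ T₂ = buresDist S₁ S₂ := by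
  unfold buresDist
  congr 1
  apply csInf_eq_csInf_of_forall_exists_le
  · rintro _ ⟨That, hT, rfl⟩
    obtain ⟨Shat, hS, hle⟩ := hTS That hT
    exact ⟨_, ⟨Shat, hS, rfl⟩, hle⟩
  · rintro _ ⟨Shat, hS, rfl⟩
    obtain ⟨That, hT, hle⟩ := hST Shat hS
    exact ⟨_, ⟨That, hT, rfl⟩, hle⟩

end Bures

theorem stmt11 {A B : Type*} [CStarAlgebra A] [CStarAlgebra B]
    {H : Type*} [NormedAddCommGroup H] [InnerProductSpace ℂ H] [CompleteSpace H]
    -- an isometric *-homomorphism `ι : B → B(H)`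
    (ι : B →⋆ₐ[ℂ] (H →L[ℂ] H)) (hι : ∀ b : B, ‖ι b‖ = ‖b‖)
    -- a completely positive conditional expectation `P : B(H) → B` onto the image of `B`
    (P : (H →L[ℂ] H) →ₗ[ℂ] B) (hP : IsCPMap P) (hPι : ∀ b : B, P (ι b) = b)
    (T₁ T₂ : A →ₗ[ℂ] B) :
    buresDist (⇑T₁) (⇑T₂) = buresDist (fun a => ι (T₁ a)) (fun a => ι (T₂ a)) := by
  have hP1 : P 1 = 1 := by simpa using hPι 1
  apply buresDist_eq_of_forall_exists_le
  · intro That hThat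
    refine ⟨ι.toLinearMap.mapMatrix ∘ₗ That,
      hThat.map (isCPMap_of_starHom ι) (fun _ => rfl) (fun _ => rfl), le_of_eq ?_⟩
    simpa using hι (T₁ 1 + T₂ 1 - That 1 0 1 - That 1 1 0)
  · intro Shat hShat
    refine ⟨P.mapMatrix ∘ₗ Shat, hShat.map hP (fun a => hPι (T₁ a)) (fun a => hPι (T₂ a)), ?_⟩
    have hdefect : T₁ 1 + T₂ 1 - P (Shat 1 0 1) - P (Shat 1 1 0)
        = P (ι (T₁ 1) + ι (T₂ 1) - Shat 1 0 1 - Shat 1 1 0) := by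
      simp [hPι]
    simpa [hdefect] using hP.norm_apply_le_of_isSelfAdjoint hP1 hShat.isSelfAdjoint_defect
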